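/- For every vector field ξ = Σ_μ ξ^μ(q) ∂/∂q^μ on X×Y, the vector field Ξ(P_ξ) on M (the pataplectic vector field of P_ξ := ξ⌟θ) leaves the Poincaré–Cartan form invariant: L_{Ξ(P_ξ)}θ = Ξ(P_ξ)⌟dθ + d(Ξ(P_ξ)⌟θ) = 0, and Ξ(P_ξ)⌟θ = P_ξ. -/

import Mathlib

open scoped BigOperators
open MeasureTheory

noncomputable section

namespace Pataplectic

/-- A multi-index `μ : Fin d → Fin e` is increasing. -/
def IncP {d e : ℕ} (μ : Fin d → Fin e) : Prop := ∀ a b : Fin d, a < b → μ a < μ b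

instance {d e : ℕ} : DecidablePred (@IncP d e) := fun μ => by unfold IncP; infer_instance

variable (n k : ℕ)

/-- Coordinates on `X × Y`, where `X = ℝⁿ` and `Y = ℝᵏ`. -/
abbrev E := Fin (n + k) → ℝ

/-- Increasing multi-indices of length `n`, indexing the coordinates
`p_{μ₁…μₙ}` of a point of `ΛⁿT*(X×Y)` over a point of `X×Y`. -/
abbrev Idx := {μ : Fin n → Fin (n + k) // IncP μ}

/-- The fiber of `ΛⁿT*(X×Y)`, described by its coordinates `p_{μ₁…μₙ}`. -/
abbrev Psp := Idx n k → ℝ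

/-- The pataplectic manifold `M = ΛⁿT*(X×Y)`. -/
abbrev Mfd := E n k × Psp n k

/-- Evaluation `⟨p, z₁ ∧ … ∧ zₙ⟩` of `p ∈ ΛⁿT*_q(X×Y)` on an `n`-tuple of
tangent vectors: `Σ_{μ₁<…<μₙ} p_{μ₁…μₙ} det (z_b^{μ_a})`. -/
def pApply (p : Psp n k) (z : Fin n → E n k) : ℝ :=
  ∑ μ : Idx n k, p μ * Matrix.det (Matrix.of fun a b => z b (μ.1 a))

/-- A (raw) differential `d`-form on `M`, given by its evaluation on `d`-tuples
of tangent vectors. -/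
abbrev Form (d : ℕ) := Mfd n k → (Fin d → Mfd n k) → ℝ

variable {n k}

/-- The exterior derivative of a `d`-form on `M`, via the standard formula
on constant vector fields. -/
def extD {d : ℕ} (ω : Form n k d) : Form n k (d + 1) :=
  fun x v => ∑ i : Fin (d + 1),
    (-1 : ℝ) ^ (i : ℕ) * fderiv ℝ (fun y => ω y (i.removeNth v)) x (v i)

/-- Interior product of a vector field with a `(d+1)`-form. -/
def iota {d : ℕ} (ξ : Mfd n k → Mfd n k) (ω : Form n k (d + 1)) : Form n k d :=
  fun x v => ω x (Fin.cons (ξ x) v)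

/-- A raw form is smooth if its evaluation on any fixed tuple of (constant)
tangent vectors is a smooth function on `M`. -/
def SmoothF {d : ℕ} (ω : Form n k d) : Prop := ∀ v, ContDiff ℝ (⊤ : ℕ∞) (fun x => ω x v)

variable (n k)

/-- The Poincaré–Cartan form `θ = Σ_{μ₁<…<μₙ} p_{μ₁…μₙ} dq^{μ₁}∧…∧dq^{μₙ}`. -/
def theta : Form n k n := fun m v => pApply n k m.2 (fun i => (v i).1)

/-- The pataplectic form `Ω = dθ`. -/
def Omega : Form n k (n + 1) := extD (theta n k)

/-- The volume form `ω = dx¹∧…∧dxⁿ`, pulled back to `M`. -/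
def vol : Form n k n := fun _ v => Matrix.det (Matrix.of fun a b => (v b).1 (Fin.castAdd k a))

/-- Lie bracket of two vector fields on `M`. -/
def lieB {n k : ℕ} (ξ η : Mfd n k → Mfd n k) : Mfd n k → Mfd n k :=
  fun x => fderiv ℝ η x (ξ x) - fderiv ℝ ξ x (η x)


/- Throughout, the dimension of `X` is `n + 1`, so that "(n-1)-forms" on
`M = Λ^{n+1}T*(X×Y)` have degree `n`. -/
variable (n k : ℕ)

/-- Increasing multi-indices of length `n` valued in the coordinates of `X×Y`
(of dimension `n+1+k`): the indices of a generalized position form `Q^ζ`. -/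
abbrev IdxQ := {ρ : Fin n → Fin (n + 1 + k) // IncP ρ}

/-- A generalized position form
`Q^ζ = Σ_{μ₁<…<μₙ} ζ_{μ₁…μₙ}(q) dq^{μ₁}∧…∧dq^{μₙ}`. -/
def Qform (ζ : IdxQ n k → E (n + 1) k → ℝ) : Form (n + 1) k n :=
  fun m v => ∑ ρ : IdxQ n k,
    ζ ρ m.1 * Matrix.det (Matrix.of fun a b => (v b).1 (ρ.1 a))

/-- Removing the `α`-th entry of an increasing multi-index of length `n+1`. -/
def removeIdx (μ : Idx (n + 1) k) (α : Fin (n + 1)) : IdxQ n k :=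
  ⟨Fin.removeNth α μ.1, fun a b h => μ.2 _ _ (Fin.strictMono_succAbove α h)⟩

/-- The pataplectic vector field
`Ξ(Q^ζ) = Σ_{μ₁<…<μ_{n+1}} Σ_α (−1)^α (∂ζ_{μ₁…μ̂_α…}/∂q^{μ_α}) ∂/∂p_{μ₁…μ_{n+1}}`
(the sign is written for 1-based `α` as in the paper; below `α` is 0-based). -/
def XiQ (ζ : IdxQ n k → E (n + 1) k → ℝ) : Mfd (n + 1) k → Mfd (n + 1) k :=
  fun m => (0, fun μ : Idx (n + 1) k =>
    ∑ α : Fin (n + 1), (-1 : ℝ) ^ ((α : ℕ) + 1) *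
      fderiv ℝ (ζ (removeIdx n k μ α)) m.1 (Pi.single (μ.1 α) 1))

/-- The coordinate `p_σ` of `p` for an arbitrary (not necessarily increasing)
multi-index `σ`, via the alternating evaluation on basis vectors. -/
def pcoord (p : Psp (n + 1) k) (σ : Fin (n + 1) → Fin (n + 1 + k)) : ℝ :=
  pApply (n + 1) k p (fun a => Pi.single (σ a) 1)

/-- The vector field
`Π^ν_μ = Σ_{μ₁<…<μ_{n+1}} Σ_α p_{μ₁…μ_{α−1} μ μ_{α+1}…} δ^ν_{μ_α} ∂/∂p_{μ₁…μ_{n+1}}`. -/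
def Pi2 (ν₀ μ₀ : Fin (n + 1 + k)) : Mfd (n + 1) k → Mfd (n + 1) k :=
  fun m => (0, fun ρ : Idx (n + 1) k =>
    ∑ α : Fin (n + 1),
      if ρ.1 α = ν₀ then pcoord n k m.2 (Function.update ρ.1 α μ₀) else 0)

/-- The generalized momentum form `P_ξ = ξ ⌟ θ` for a vector field `ξ` on `X×Y`. -/
def Pform (ξ : E (n + 1) k → E (n + 1) k) : Form (n + 1) k n :=
  iota (fun m => (ξ m.1, 0)) (theta (n + 1) k)

/-- The pataplectic vector field `Ξ(P_ξ) = ξ − Σ_{μ,ν} (∂ξ^μ/∂q^ν) Π^ν_μ`. -/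
def XiP (ξ : E (n + 1) k → E (n + 1) k) : Mfd (n + 1) k → Mfd (n + 1) k :=
  fun m => ((ξ m.1, 0) : Mfd (n + 1) k)
    - ∑ μ₀ : Fin (n + 1 + k), ∑ ν₀ : Fin (n + 1 + k),
        fderiv ℝ (fun q => ξ q μ₀) m.1 (Pi.single ν₀ 1) • Pi2 n k ν₀ μ₀ m

/-- Wedge of the coordinate 1-form `dq^{ν₀}` with a `d`-form. -/
def oneWedge {d : ℕ} (ν₀ : Fin (n + 1 + k)) (β : Form (n + 1) k d) :
    Form (n + 1) k (d + 1) :=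
  fun x v => ∑ i : Fin (d + 1),
    (-1 : ℝ) ^ (i : ℕ) * (v i).1 ν₀ * β x (i.removeNth v)


/-! ### Auxiliary material -/

section Aux

variable {n k : ℕ}

/-- determinant form: rows = vectors, columns = σ-coordinates -/
def Dm (σ : Fin (n+1) → Fin (n+1+k)) (z : Fin (n+1) → E (n+1) k) : ℝ :=
  (Matrix.of fun a b => z a (σ b)).det

lemma Dm_perm_right (σ : Fin (n+1) → Fin (n+1+k)) (z) (π : Equiv.Perm (Fin (n+1))) :
    Dm (σ ∘ π) z = ((Equiv.Perm.sign π : ℤ) : ℝ) * Dm σ z := by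
  have : (Matrix.of fun a b => z a ((σ ∘ π) b)) =
      (Matrix.of fun a b => z a (σ b)).submatrix id π := rfl
  rw [Dm, this, Matrix.det_permute']; rfl

lemma Dm_perm_left (σ : Fin (n+1) → Fin (n+1+k)) (z) (π : Equiv.Perm (Fin (n+1))) :
    Dm σ (z ∘ π) = ((Equiv.Perm.sign π : ℤ) : ℝ) * Dm σ z := by
  have : (Matrix.of fun a b => (z ∘ π) a (σ b)) =
      (Matrix.of fun a b => z a (σ b)).submatrix π id := rfl
  rw [Dm, this, Matrix.det_permute]; rfl

lemma Dm_zero_right {σ : Fin (n+1) → Fin (n+1+k)} (z) {b b' : Fin (n+1)}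
    (hne : b ≠ b') (h : σ b = σ b') : Dm σ z = 0 :=
  Matrix.det_zero_of_column_eq hne (fun a => by simp [h])

lemma Dm_zero_of_not_inj {σ : Fin (n+1) → Fin (n+1+k)} (z)
    (h : ¬ Function.Injective σ) : Dm σ z = 0 := by
  simp only [Function.Injective, not_forall] at h
  obtain ⟨b, b', h1, h2⟩ := h
  exact Dm_zero_right z (fun hc => h2 (by rw [hc])) h1

lemma cons_removeNth_eq (w : E (n+1) k) (z : Fin (n+1) → E (n+1) k) (i : Fin (n+1)) :
    Fin.cons w (Fin.removeNth i z) = (Function.update z i w) ∘ (Fin.cycleRange i).symm := by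
  funext a
  refine Fin.cases ?_ (fun j => ?_) a
  · rw [Fin.cons_zero, Function.comp_apply, Fin.cycleRange_symm_zero,
      Function.update_self]
  · rw [Fin.cons_succ, Function.comp_apply, Fin.cycleRange_symm_succ,
      Function.update_of_ne (Fin.succAbove_ne i j)]
    rfl

lemma Dm_cons_removeNth (σ : Fin (n+1) → Fin (n+1+k)) (w : E (n+1) k)
    (z : Fin (n+1) → E (n+1) k) (i : Fin (n+1)) :
    Dm σ (Fin.cons w (Fin.removeNth i z)) = (-1 : ℝ)^(i : ℕ) * Dm σ (Function.update z i w) := by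
  rw [cons_removeNth_eq, Dm_perm_left]
  congr 2
  rw [Equiv.Perm.sign_symm, Fin.sign_cycleRange]
  push_cast
  rfl

lemma matrix_update (σ : Fin (n+1) → Fin (n+1+k)) (z : Fin (n+1) → E (n+1) k)
    (i : Fin (n+1)) (w : E (n+1) k) :
    (Matrix.of fun a b => (Function.update z i w) a (σ b)) =
      (Matrix.of fun a b => z a (σ b)).updateRow i (fun b => w (σ b)) := by
  ext a b
  rcases eq_or_ne a i with rfl | h
  · simp
  · simp [Matrix.updateRow_ne h, Function.update_of_ne h]

lemma Dm_update_add (σ : Fin (n+1) → Fin (n+1+k)) (z) (i : Fin (n+1)) (w w' : E (n+1) k) :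
    Dm σ (Function.update z i (w + w')) =
      Dm σ (Function.update z i w) + Dm σ (Function.update z i w') := by
  simp only [Dm, matrix_update]
  have : (fun b => (w + w') (σ b)) = (fun b => w (σ b)) + (fun b => w' (σ b)) := rfl
  rw [this, Matrix.det_updateRow_add]

lemma Dm_update_smul (σ : Fin (n+1) → Fin (n+1+k)) (z) (i : Fin (n+1)) (c : ℝ) (w : E (n+1) k) :
    Dm σ (Function.update z i (c • w)) = c * Dm σ (Function.update z i w) := by
  simp only [Dm, matrix_update]
  have : (fun b => (c • w) (σ b)) = c • (fun b => w (σ b)) := rfl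
  rw [this, Matrix.det_updateRow_smul]

/-- expansion of updated row via adjugate -/
lemma det_updateRow_expand (M : Matrix (Fin (n+1)) (Fin (n+1)) ℝ) (i : Fin (n+1))
    (r : Fin (n+1) → ℝ) :
    (M.updateRow i r).det = ∑ b, r b * M.adjugate b i := by
  have hr : r = ∑ b : Fin (n+1), Pi.single b (r b) := by
    rw [Finset.univ_sum_single]
  have h1 : ∀ r' : Fin (n+1) → ℝ, (M.updateRow i r').det =
      (Matrix.detRowAlternating : (Fin (n+1) → ℝ) [⋀^Fin (n+1)]→ₗ[ℝ] ℝ)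
        (Function.update M i r') := fun r' => rfl
  rw [hr, h1, ← AlternatingMap.coe_multilinearMap,
    (Matrix.detRowAlternating : (Fin (n+1) → ℝ) [⋀^Fin (n+1)]→ₗ[ℝ] ℝ).toMultilinearMap.map_update_sum
    (Finset.univ) i (fun b => (Pi.single b (r b) : Fin (n+1) → ℝ)) M]
  refine Finset.sum_congr rfl fun b _ => ?_
  have h2 : (Pi.single b (r b) : Fin (n+1) → ℝ) = r b • (Pi.single b 1 : Fin (n+1) → ℝ) := by
    rw [← Pi.single_smul, smul_eq_mul, mul_one]
  erw [h2, (Matrix.detRowAlternating (R := ℝ) (n := Fin (n+1))).toMultilinearMap.map_update_smul,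
    AlternatingMap.coe_multilinearMap, ← h1, ← Matrix.adjugate_apply]
  simp [smul_eq_mul, hr.symm]

lemma matrix_update_col (σ : Fin (n+1) → Fin (n+1+k)) (z : Fin (n+1) → E (n+1) k)
    (b : Fin (n+1)) (ν : Fin (n+1+k)) :
    (Matrix.of fun a c => z a ((Function.update σ b ν) c)) =
      (Matrix.of fun a c => z a (σ c)).updateCol b (fun a => z a ν) := by
  ext a c
  rcases eq_or_ne c b with rfl | h
  · simp
  · simp [Matrix.updateCol_ne h, Function.update_of_ne h]

lemma det_updateColumn_expand (M : Matrix (Fin (n+1)) (Fin (n+1)) ℝ) (b : Fin (n+1))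
    (u : Fin (n+1) → ℝ) :
    (M.updateCol b u).det = ∑ i, u i * M.adjugate b i := by
  rw [← Matrix.det_transpose, ← Matrix.updateRow_transpose, det_updateRow_expand]
  refine Finset.sum_congr rfl fun i _ => ?_
  rw [← Matrix.adjugate_transpose, Matrix.transpose_apply]

lemma clm_single_expand (A : E (n+1) k →L[ℝ] E (n+1) k) (w : E (n+1) k) :
    A w = ∑ ν : Fin (n+1+k), w ν • A (Pi.single ν 1) := by
  conv_lhs => rw [show w = ∑ ν : Fin (n+1+k), Pi.single ν (w ν) from (Finset.univ_sum_single w).symm]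
  rw [_root_.map_sum]
  refine Finset.sum_congr rfl fun ν _ => ?_
  have : (Pi.single ν (w ν) : E (n+1) k) = w ν • (Pi.single ν 1 : E (n+1) k) := by
    rw [← Pi.single_smul, smul_eq_mul, mul_one]
  rw [this, _root_.map_smul]

lemma Dm_deriv (σ : Fin (n+1) → Fin (n+1+k)) (z : Fin (n+1) → E (n+1) k)
    (A : E (n+1) k →L[ℝ] E (n+1) k) :
    ∑ i, Dm σ (Function.update z i (A (z i))) =
      ∑ b, ∑ ν : Fin (n+1+k), (A (Pi.single ν 1)) (σ b) * Dm (Function.update σ b ν) z := by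
  set M : Matrix (Fin (n+1)) (Fin (n+1)) ℝ := Matrix.of fun a c => z a (σ c) with hM
  have lhs : ∀ i, Dm σ (Function.update z i (A (z i))) =
      ∑ b, ∑ ν : Fin (n+1+k), z i ν * ((A (Pi.single ν 1)) (σ b) * M.adjugate b i) := by
    intro i
    rw [Dm, matrix_update, det_updateRow_expand]
    refine Finset.sum_congr rfl fun b _ => ?_
    rw [clm_single_expand A (z i)]
    simp only [Finset.sum_apply, Pi.smul_apply, smul_eq_mul, Finset.sum_mul]
    exact Finset.sum_congr rfl fun ν _ => by ring
  have rhs : ∀ b (ν : Fin (n+1+k)), Dm (Function.update σ b ν) z =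
      ∑ i, z i ν * M.adjugate b i := by
    intro b ν
    rw [Dm, matrix_update_col, ← hM, det_updateColumn_expand]
  simp only [lhs, rhs]
  rw [Finset.sum_comm]
  refine Finset.sum_congr rfl fun b _ => ?_
  rw [Finset.sum_comm]
  refine Finset.sum_congr rfl fun ν _ => ?_
  rw [Finset.mul_sum]
  exact Finset.sum_congr rfl fun i _ => by ring

end Aux

section Aux2

variable {n k : ℕ}

lemma sign_cast_mul_self (π : Equiv.Perm (Fin (n+1))) :
    ((Equiv.Perm.sign π : ℤ) : ℝ) * ((Equiv.Perm.sign π : ℤ) : ℝ) = 1 := by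
  rcases Int.units_eq_one_or (Equiv.Perm.sign π) with h | h <;> rw [h] <;> norm_num

lemma update_comp_perm (σ : Fin (n+1) → Fin (n+1+k)) (π : Equiv.Perm (Fin (n+1)))
    (b : Fin (n+1)) (ν : Fin (n+1+k)) :
    Function.update (σ ∘ π) b ν = (Function.update σ (π b) ν) ∘ π := by
  funext c
  rcases eq_or_ne c b with rfl | h
  · simp
  · rw [Function.update_of_ne h, Function.comp_apply, Function.comp_apply,
      Function.update_of_ne (fun hc => h (π.injective hc))]

lemma pcoord_eq (p : Psp (n+1) k) (σ : Fin (n+1) → Fin (n+1+k)) :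
    pcoord n k p σ = ∑ μ : Idx (n+1) k,
      p μ * (Matrix.of fun a b => (Pi.single (σ b) 1 : E (n+1) k) (μ.1 a)).det := rfl

lemma pcoord_perm (p : Psp (n+1) k) (σ : Fin (n+1) → Fin (n+1+k))
    (π : Equiv.Perm (Fin (n+1))) :
    pcoord n k p (σ ∘ π) = ((Equiv.Perm.sign π : ℤ) : ℝ) * pcoord n k p σ := by
  rw [pcoord_eq, pcoord_eq, Finset.mul_sum]
  refine Finset.sum_congr rfl fun μ _ => ?_
  have : (Matrix.of fun a b => (Pi.single ((σ ∘ π) b) 1 : E (n+1) k) (μ.1 a)) =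
      (Matrix.of fun a b => (Pi.single (σ b) 1 : E (n+1) k) (μ.1 a)).submatrix id π := rfl
  rw [this, Matrix.det_permute']
  push_cast
  ring

lemma pcoord_zero_of_not_inj (p : Psp (n+1) k) {σ : Fin (n+1) → Fin (n+1+k)}
    (h : ¬ Function.Injective σ) : pcoord n k p σ = 0 := by
  simp only [Function.Injective, not_forall] at h
  obtain ⟨b, b', h1, h2⟩ := h
  rw [pcoord_eq]
  refine Finset.sum_eq_zero fun μ _ => ?_
  rw [Matrix.det_zero_of_column_eq (i := b) (j := b') (fun hc => h2 (by rw [hc]))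
    (fun a => by rw [Matrix.of_apply, Matrix.of_apply, h1]), mul_zero]

lemma incP_strictMono {d e : ℕ} {μ : Fin d → Fin e} (h : IncP μ) : StrictMono μ :=
  fun a b hab => h a b hab

lemma pcoord_inc (p : Psp (n+1) k) (μ : Idx (n+1) k) : pcoord n k p μ.1 = p μ := by
  rw [pcoord_eq]
  have key : ∀ μ' : Idx (n+1) k,
      (Matrix.of fun a b => (Pi.single (μ.1 b) 1 : E (n+1) k) (μ'.1 a)).det =
        if μ' = μ then 1 else 0 := by
    intro μ'
    rcases eq_or_ne μ' μ with rfl | hne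
    · rw [if_pos rfl]
      have : (Matrix.of fun a b => (Pi.single (μ'.1 b) 1 : E (n+1) k) (μ'.1 a)) =
          (1 : Matrix (Fin (n+1)) (Fin (n+1)) ℝ) := by
        ext a b
        simp [Pi.single_apply, Matrix.one_apply, (incP_strictMono μ'.2).injective.eq_iff,
          eq_comm]
      rw [this, Matrix.det_one]
    · rw [if_neg hne]
      by_cases hsub : ∀ a, μ'.1 a ∈ Set.range μ.1
      · exfalso
        have hs : Finset.image μ'.1 Finset.univ ⊆ Finset.image μ.1 Finset.univ := by
          intro x hx
          simp only [Finset.mem_image, Finset.mem_univ, true_and] at hx ⊢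
          obtain ⟨a, rfl⟩ := hx
          obtain ⟨b, hb⟩ := hsub a
          exact ⟨b, hb⟩
        have hcards : (Finset.image μ.1 Finset.univ).card ≤ (Finset.image μ'.1 Finset.univ).card := by
          rw [Finset.card_image_of_injective _ (incP_strictMono μ.2).injective,
            Finset.card_image_of_injective _ (incP_strictMono μ'.2).injective]
        have heq := Finset.eq_of_subset_of_card_le hs hcards
        have hrange : Set.range μ'.1 = Set.range μ.1 := by
          rw [← Set.image_univ, ← Set.image_univ, ← Finset.coe_univ, ← Finset.coe_image,
            ← Finset.coe_image, heq]
        haveI : WellFoundedLT (Fin (n+1)) := inferInstance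
        have hri := StrictMono.range_inj (incP_strictMono μ'.2) (incP_strictMono μ.2)
        exact hne (Subtype.ext (hri.1 hrange))
      · push_neg at hsub
        obtain ⟨a, ha⟩ := hsub
        refine Matrix.det_eq_zero_of_row_eq_zero a fun b => ?_
        simp only [Matrix.of_apply, Pi.single_apply]
        rw [if_neg]
        intro hc
        exact ha ⟨b, hc.symm⟩
  simp only [key]
  simp

/-- Summand for the left-hand side, over arbitrary multi-indices. -/
def Gfun (p : Psp (n+1) k) (z : Fin (n+1) → E (n+1) k)
    (Amat : Fin (n+1+k) → Fin (n+1+k) → ℝ) (σ : Fin (n+1) → Fin (n+1+k)) : ℝ :=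
  ∑ b, ∑ ν : Fin (n+1+k), Amat (σ b) ν * (pcoord n k p σ * Dm (Function.update σ b ν) z)

/-- Summand for the right-hand side, over arbitrary multi-indices. -/
def Hfun (p : Psp (n+1) k) (z : Fin (n+1) → E (n+1) k)
    (Amat : Fin (n+1+k) → Fin (n+1+k) → ℝ) (σ : Fin (n+1) → Fin (n+1+k)) : ℝ :=
  ∑ α, ∑ μ₀ : Fin (n+1+k), Amat μ₀ (σ α) * (pcoord n k p (Function.update σ α μ₀) * Dm σ z)

lemma Gfun_perm (p z Amat) (σ : Fin (n+1) → Fin (n+1+k)) (π : Equiv.Perm (Fin (n+1))) :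
    Gfun p z Amat (σ ∘ π) = Gfun p z Amat σ := by
  unfold Gfun
  refine Fintype.sum_equiv π _ _ fun b => ?_
  refine Finset.sum_congr rfl fun ν _ => ?_
  rw [Function.comp_apply, update_comp_perm, Dm_perm_right, pcoord_perm]
  have hs := sign_cast_mul_self π
  set s := ((Equiv.Perm.sign π : ℤ) : ℝ)
  linear_combination (Amat (σ (π b)) ν * pcoord n k p σ * Dm (Function.update σ (π b) ν) z) * hs

lemma Hfun_perm (p z Amat) (σ : Fin (n+1) → Fin (n+1+k)) (π : Equiv.Perm (Fin (n+1))) :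
    Hfun p z Amat (σ ∘ π) = Hfun p z Amat σ := by
  unfold Hfun
  refine Fintype.sum_equiv π _ _ fun α => ?_
  refine Finset.sum_congr rfl fun μ₀ _ => ?_
  rw [Function.comp_apply, update_comp_perm, Dm_perm_right, pcoord_perm]
  have hs := sign_cast_mul_self π
  set s := ((Equiv.Perm.sign π : ℤ) : ℝ)
  linear_combination (Amat μ₀ (σ (π α)) * pcoord n k p (Function.update σ (π α) μ₀) * Dm σ z) * hs

lemma Gfun_zero (p z Amat) {σ : Fin (n+1) → Fin (n+1+k)} (h : ¬ Function.Injective σ) :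
    Gfun p z Amat σ = 0 := by
  unfold Gfun
  refine Finset.sum_eq_zero fun b _ => Finset.sum_eq_zero fun ν _ => ?_
  rw [pcoord_zero_of_not_inj p h, zero_mul, mul_zero]

lemma Hfun_zero (p z Amat) {σ : Fin (n+1) → Fin (n+1+k)} (h : ¬ Function.Injective σ) :
    Hfun p z Amat σ = 0 := by
  unfold Hfun
  refine Finset.sum_eq_zero fun α _ => Finset.sum_eq_zero fun μ₀ _ => ?_
  rw [Dm_zero_of_not_inj z h, mul_zero, mul_zero]

lemma sumG_eq_sumH (p : Psp (n+1) k) (z : Fin (n+1) → E (n+1) k)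
    (Amat : Fin (n+1+k) → Fin (n+1+k) → ℝ) :
    ∑ σ : Fin (n+1) → Fin (n+1+k), Gfun p z Amat σ
      = ∑ σ : Fin (n+1) → Fin (n+1+k), Hfun p z Amat σ := by
  have lhs : ∑ σ : Fin (n+1) → Fin (n+1+k), Gfun p z Amat σ =
      ∑ t : (Fin (n+1) → Fin (n+1+k)) × Fin (n+1) × Fin (n+1+k),
        Amat (t.1 t.2.1) t.2.2 * (pcoord n k p t.1 * Dm (Function.update t.1 t.2.1 t.2.2) z) := by
    rw [Fintype.sum_prod_type]
    exact Finset.sum_congr rfl fun σ _ => by rw [Fintype.sum_prod_type]; rfl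
  have rhs : ∑ σ : Fin (n+1) → Fin (n+1+k), Hfun p z Amat σ =
      ∑ t : (Fin (n+1) → Fin (n+1+k)) × Fin (n+1) × Fin (n+1+k),
        Amat t.2.2 (t.1 t.2.1) * (pcoord n k p (Function.update t.1 t.2.1 t.2.2) * Dm t.1 z) := by
    rw [Fintype.sum_prod_type]
    exact Finset.sum_congr rfl fun σ _ => by rw [Fintype.sum_prod_type]; rfl
  rw [lhs, rhs]
  have hinv : Function.Involutive
      (fun t : (Fin (n+1) → Fin (n+1+k)) × Fin (n+1) × Fin (n+1+k) =>
        (Function.update t.1 t.2.1 t.2.2, t.2.1, t.1 t.2.1)) := by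
    rintro ⟨σ, b, ν⟩
    simp [Function.update_idem, Function.update_eq_self]
  refine Fintype.sum_equiv hinv.toPerm _ _ ?_
  rintro ⟨σ, b, ν⟩
  simp only [Function.Involutive.coe_toPerm, Function.update_self, Function.update_idem,
    Function.update_eq_self]

end Aux2

section Aux3

variable {n k : ℕ}

open Classical in
/-- The bijection between pairs (permutation, increasing index) and injective indices. -/
lemma sum_all_eq_factorial_mul (g : (Fin (n+1) → Fin (n+1+k)) → ℝ)
    (hperm : ∀ σ (π : Equiv.Perm (Fin (n+1))), g (σ ∘ π) = g σ)
    (hzero : ∀ σ, ¬ Function.Injective σ → g σ = 0) :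
    ∑ σ : Fin (n+1) → Fin (n+1+k), g σ
      = (Nat.factorial (n+1) : ℝ) * ∑ μ : Idx (n+1) k, g μ.1 := by
  classical
  have Φinj : Function.Injective
      (fun pr : Equiv.Perm (Fin (n+1)) × Idx (n+1) k => pr.2.1 ∘ pr.1) := by
    rintro ⟨π₁, μ₁⟩ ⟨π₂, μ₂⟩ h
    simp only at h
    have hr : Set.range μ₁.1 = Set.range μ₂.1 := by
      rw [← π₁.surjective.range_comp μ₁.1, ← π₂.surjective.range_comp μ₂.1, h]
    haveI : WellFoundedLT (Fin (n+1)) := inferInstance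
    have hμ : μ₁ = μ₂ := Subtype.ext
      (((incP_strictMono μ₁.2).range_inj (incP_strictMono μ₂.2)).1 hr)
    subst hμ
    have hπ : π₁ = π₂ := by
      apply Equiv.ext
      intro i
      exact (incP_strictMono μ₁.2).injective (congrFun h i)
    simp [hπ]
  have hsum : ∑ σ : Fin (n+1) → Fin (n+1+k), g σ
      = ∑ σ ∈ Finset.univ.filter (fun σ : Fin (n+1) → Fin (n+1+k) =>
          Function.Injective σ), g σ := by
    rw [Finset.sum_filter]
    refine Finset.sum_congr rfl fun σ _ => ?_
    by_cases h : Function.Injective σ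
    · rw [if_pos h]
    · rw [if_neg h, hzero σ h]
  have himage : Finset.univ.filter (fun σ : Fin (n+1) → Fin (n+1+k) =>
      Function.Injective σ) = Finset.univ.image
        (fun pr : Equiv.Perm (Fin (n+1)) × Idx (n+1) k => pr.2.1 ∘ pr.1) := by
    ext σ
    simp only [Finset.mem_image, Finset.mem_univ, true_and, Finset.mem_filter]
    constructor
    · intro hσ
      set s := Finset.image σ Finset.univ with hs
      have hcard : s.card = n+1 := by
        rw [hs, Finset.card_image_of_injective _ hσ, Finset.card_univ, Fintype.card_fin]
      have hmono : StrictMono (s.orderEmbOfFin hcard) := (s.orderEmbOfFin hcard).strictMono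
      refine ⟨⟨?_, ⟨⇑(s.orderEmbOfFin hcard), fun a b hab => hmono hab⟩⟩, ?_⟩
      · refine (Equiv.ofBijective (fun i => (⟨σ i,
            Finset.mem_image_of_mem σ (Finset.mem_univ i)⟩ : {x // x ∈ s})) ?_).trans
          (s.orderIsoOfFin hcard).toEquiv.symm
        refine (Fintype.bijective_iff_injective_and_card _).2 ⟨?_, by simp [hcard]⟩
        intro a b hab
        exact hσ (congrArg Subtype.val hab)
      · funext i
        simp only [Function.comp_apply, Equiv.trans_apply]
        rw [← Finset.coe_orderIsoOfFin_apply]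
        simp only [OrderIso.toEquiv_symm, Equiv.ofBijective_apply]
        exact congrArg Subtype.val ((s.orderIsoOfFin hcard).apply_symm_apply
          ⟨σ i, Finset.mem_image_of_mem σ (Finset.mem_univ i)⟩)
    · rintro ⟨⟨π, μ⟩, rfl⟩
      exact (incP_strictMono μ.2).injective.comp π.injective
  rw [hsum, himage, Finset.sum_image (fun x _ y _ h => Φinj h), Fintype.sum_prod_type]
  have : ∀ π : Equiv.Perm (Fin (n+1)), ∑ μ : Idx (n+1) k, g (μ.1 ∘ π)
      = ∑ μ : Idx (n+1) k, g μ.1 :=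
    fun π => Finset.sum_congr rfl fun μ _ => hperm μ.1 π
  simp only [this]
  rw [Finset.sum_const, Finset.card_univ, Fintype.card_perm, Fintype.card_fin,
    nsmul_eq_mul]

/-- The combinatorial core identity. -/
lemma core_identity (p : Psp (n+1) k) (z : Fin (n+1) → E (n+1) k)
    (Amat : Fin (n+1+k) → Fin (n+1+k) → ℝ) :
    ∑ μ : Idx (n+1) k, (p μ *
        ∑ b, ∑ ν : Fin (n+1+k), Amat (μ.1 b) ν * Dm (Function.update μ.1 b ν) z)
    = ∑ ρ : Idx (n+1) k,
        ((∑ α, ∑ μ₀ : Fin (n+1+k), Amat μ₀ (ρ.1 α) * pcoord n k p (Function.update ρ.1 α μ₀))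
          * Dm ρ.1 z) := by
  have hG : ∀ μ : Idx (n+1) k, Gfun p z Amat μ.1 =
      p μ * ∑ b, ∑ ν : Fin (n+1+k), Amat (μ.1 b) ν * Dm (Function.update μ.1 b ν) z := by
    intro μ
    unfold Gfun
    rw [Finset.mul_sum]
    refine Finset.sum_congr rfl fun b _ => ?_
    rw [Finset.mul_sum]
    refine Finset.sum_congr rfl fun ν _ => ?_
    rw [pcoord_inc]
    ring
  have hH : ∀ ρ : Idx (n+1) k, Hfun p z Amat ρ.1 =
      (∑ α, ∑ μ₀ : Fin (n+1+k), Amat μ₀ (ρ.1 α) * pcoord n k p (Function.update ρ.1 α μ₀))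
        * Dm ρ.1 z := by
    intro ρ
    unfold Hfun
    rw [Finset.sum_mul]
    refine Finset.sum_congr rfl fun α _ => ?_
    rw [Finset.sum_mul]
    refine Finset.sum_congr rfl fun μ₀ _ => by ring
  have h1 := sum_all_eq_factorial_mul (Gfun p z Amat) (Gfun_perm p z Amat)
    (fun σ h => Gfun_zero p z Amat h)
  have h2 := sum_all_eq_factorial_mul (Hfun p z Amat) (Hfun_perm p z Amat)
    (fun σ h => Hfun_zero p z Amat h)
  have h3 := sumG_eq_sumH p z Amat
  rw [h1, h2] at h3
  have hfac : (Nat.factorial (n+1) : ℝ) ≠ 0 := by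
    exact_mod_cast Nat.factorial_ne_zero (n+1)
  have h4 := mul_left_cancel₀ hfac h3
  calc ∑ μ : Idx (n+1) k, (p μ *
        ∑ b, ∑ ν : Fin (n+1+k), Amat (μ.1 b) ν * Dm (Function.update μ.1 b ν) z)
      = ∑ μ : Idx (n+1) k, Gfun p z Amat μ.1 := by
        exact Finset.sum_congr rfl fun μ _ => (hG μ).symm
    _ = ∑ ρ : Idx (n+1) k, Hfun p z Amat ρ.1 := h4
    _ = _ := Finset.sum_congr rfl fun ρ _ => hH ρ

end Aux3

section Aux4

variable {n k : ℕ}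

lemma pApply_eq (p : Psp (n+1) k) (z : Fin (n+1) → E (n+1) k) :
    pApply (n+1) k p z = ∑ μ : Idx (n+1) k, p μ * Dm μ.1 z := by
  refine Finset.sum_congr rfl fun μ _ => ?_
  congr 1
  rw [Dm, ← Matrix.det_transpose]
  rfl

lemma theta_eq (m : Mfd (n+1) k) (v : Fin (n+1) → Mfd (n+1) k) :
    theta (n+1) k m v = ∑ μ : Idx (n+1) k, m.2 μ * Dm μ.1 (fun i => (v i).1) :=
  pApply_eq _ _

lemma cons_fst {m : ℕ} (a : Mfd (n+1) k) (v : Fin m → Mfd (n+1) k) :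
    (fun i => ((Fin.cons a v : Fin (m+1) → Mfd (n+1) k) i).1) =
      (Fin.cons a.1 (fun i => (v i).1) : Fin (m+1) → E (n+1) k) := by
  funext i
  refine Fin.cases rfl (fun j => rfl) i

lemma XiP_fst (ξ : E (n+1) k → E (n+1) k) (x : Mfd (n+1) k) :
    (XiP n k ξ x).1 = ξ x.1 := by
  rw [XiP, Prod.fst_sub, Prod.fst_sum]
  simp [Pi2, Prod.fst_sum, Prod.smul_fst]

/-- The matrix of partial derivatives of `ξ` at `x.1`. -/
def Amat (ξ : E (n+1) k → E (n+1) k) (x : Mfd (n+1) k)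
    (μ₀ ν : Fin (n+1+k)) : ℝ :=
  fderiv ℝ (fun q => ξ q μ₀) x.1 (Pi.single ν 1)

lemma XiP_snd (ξ : E (n+1) k → E (n+1) k) (x : Mfd (n+1) k) (μ : Idx (n+1) k) :
    (XiP n k ξ x).2 μ =
      -∑ α, ∑ μ₀ : Fin (n+1+k), Amat ξ x μ₀ (μ.1 α) *
        pcoord n k x.2 (Function.update μ.1 α μ₀) := by
  rw [XiP]
  simp only [Prod.snd_sub, Prod.snd_sum, Pi.sub_apply, Finset.sum_apply, Pi2, Prod.smul_snd,
    Pi.smul_apply, smul_eq_mul, Pi.zero_apply, zero_sub, neg_inj, Finset.mul_sum, mul_ite,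
    mul_zero]
  have step : ∀ μ₀ : Fin (n+1+k),
      (∑ ν₀ : Fin (n+1+k), ∑ α : Fin (n+1),
        if μ.1 α = ν₀ then
          (fderiv ℝ (fun q => ξ q μ₀) x.1) (Pi.single ν₀ 1) *
            pcoord n k x.2 (Function.update μ.1 α μ₀) else 0)
      = ∑ α : Fin (n+1), Amat ξ x μ₀ (μ.1 α) * pcoord n k x.2 (Function.update μ.1 α μ₀) := by
    intro μ₀
    rw [Finset.sum_comm]
    refine Finset.sum_congr rfl fun α _ => ?_
    rw [Finset.sum_ite_eq, if_pos (Finset.mem_univ _)]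
    rfl
  rw [Finset.sum_congr rfl fun μ₀ _ => step μ₀, Finset.sum_comm]

lemma cons_eq_update (w : E (n+1) k) (z : Fin n → E (n+1) k) :
    (Fin.cons w z : Fin (n+1) → E (n+1) k) =
      Function.update (Fin.cons 0 z : Fin (n+1) → E (n+1) k) 0 w := by
  rw [Fin.update_cons_zero]

/-- `w ↦ ⟨dq^{σ}, w ∧ z₁ ∧ … ∧ zₙ⟩` as a continuous linear map. -/
def consCLM (σ : Fin (n+1) → Fin (n+1+k)) (z : Fin n → E (n+1) k) :
    E (n+1) k →L[ℝ] ℝ :=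
  LinearMap.toContinuousLinearMap
    { toFun := fun w => Dm σ (Fin.cons w z)
      map_add' := fun w w' => by
        show Dm σ (Fin.cons (w + w') z) = Dm σ (Fin.cons w z) + Dm σ (Fin.cons w' z)
        have h := Dm_update_add σ (Fin.cons 0 z) 0 w w'
        rw [← cons_eq_update, ← cons_eq_update, ← cons_eq_update] at h
        exact h
      map_smul' := fun c w => by
        show Dm σ (Fin.cons (c • w) z) = c • Dm σ (Fin.cons w z)
        have h := Dm_update_smul σ (Fin.cons 0 z) 0 c w
        rw [← cons_eq_update, ← cons_eq_update] at h
        rw [h]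
        rfl }

@[simp] lemma consCLM_apply (σ : Fin (n+1) → Fin (n+1+k)) (z : Fin n → E (n+1) k)
    (w : E (n+1) k) : consCLM σ z w = Dm σ (Fin.cons w z) := rfl

/-- The derivative of `y ↦ θ_y(w)`. -/
def thetaCLM (w : Fin (n+1) → Mfd (n+1) k) : Mfd (n+1) k →L[ℝ] ℝ :=
  ∑ μ : Idx (n+1) k, Dm μ.1 (fun i => (w i).1) •
    ((ContinuousLinearMap.proj μ).comp
      (ContinuousLinearMap.snd ℝ (E (n+1) k) (Psp (n+1) k)))

lemma thetaCLM_apply (w : Fin (n+1) → Mfd (n+1) k) (u : Mfd (n+1) k) :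
    thetaCLM w u = ∑ μ : Idx (n+1) k, u.2 μ * Dm μ.1 (fun i => (w i).1) := by
  rw [thetaCLM, ContinuousLinearMap.sum_apply]
  refine Finset.sum_congr rfl fun μ _ => ?_
  simp [mul_comm]

lemma hasFDeriv_theta (w : Fin (n+1) → Mfd (n+1) k) (x : Mfd (n+1) k) :
    HasFDerivAt (fun y => theta (n+1) k y w) (thetaCLM w) x := by
  have : (fun y => theta (n+1) k y w) = ⇑(thetaCLM w) := by
    funext y
    rw [theta_eq, thetaCLM_apply]
  rw [this]
  exact (thetaCLM w).hasFDerivAt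

lemma fderiv_theta_apply (w : Fin (n+1) → Mfd (n+1) k) (x u : Mfd (n+1) k) :
    fderiv ℝ (fun y => theta (n+1) k y w) x u =
      ∑ μ : Idx (n+1) k, u.2 μ * Dm μ.1 (fun i => (w i).1) := by
  rw [(hasFDeriv_theta w x).fderiv, thetaCLM_apply]

lemma iota_theta_eq (ξ : E (n+1) k → E (n+1) k) (x : Mfd (n+1) k)
    (v : Fin n → Mfd (n+1) k) :
    iota (XiP n k ξ) (theta (n+1) k) x v =
      ∑ μ : Idx (n+1) k, x.2 μ * Dm μ.1 (Fin.cons (ξ x.1) (fun i => (v i).1)) := by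
  rw [iota, theta_eq]
  refine Finset.sum_congr rfl fun μ _ => ?_
  rw [cons_fst, XiP_fst]

lemma hasFDeriv_iotaTheta (ξ : E (n+1) k → E (n+1) k) (hξ : ContDiff ℝ (⊤ : ℕ∞) ξ)
    (w : Fin n → Mfd (n+1) k) (x : Mfd (n+1) k) :
    HasFDerivAt (fun y => iota (XiP n k ξ) (theta (n+1) k) y w)
      (∑ μ : Idx (n+1) k,
        (x.2 μ • ((consCLM μ.1 (fun i => (w i).1)).comp
            ((fderiv ℝ ξ x.1).comp (ContinuousLinearMap.fst ℝ (E (n+1) k) (Psp (n+1) k))))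
          + Dm μ.1 (Fin.cons (ξ x.1) (fun i => (w i).1)) •
            ((ContinuousLinearMap.proj μ).comp
              (ContinuousLinearMap.snd ℝ (E (n+1) k) (Psp (n+1) k))))) x := by
  have hfun : (fun y => iota (XiP n k ξ) (theta (n+1) k) y w) =
      (fun y : Mfd (n+1) k => ∑ μ : Idx (n+1) k,
        y.2 μ * Dm μ.1 (Fin.cons (ξ y.1) (fun i => (w i).1))) := by
    funext y
    rw [iota_theta_eq]
  rw [hfun]
  refine HasFDerivAt.fun_sum fun μ _ => ?_
  have hc : HasFDerivAt (fun y : Mfd (n+1) k => y.2 μ)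
      ((ContinuousLinearMap.proj μ).comp
        (ContinuousLinearMap.snd ℝ (E (n+1) k) (Psp (n+1) k))) x :=
    ((ContinuousLinearMap.proj μ).comp
      (ContinuousLinearMap.snd ℝ (E (n+1) k) (Psp (n+1) k))).hasFDerivAt
  have hd : HasFDerivAt
      (fun y : Mfd (n+1) k => Dm μ.1 (Fin.cons (ξ y.1) (fun i => (w i).1)))
      ((consCLM μ.1 (fun i => (w i).1)).comp
        ((fderiv ℝ ξ x.1).comp (ContinuousLinearMap.fst ℝ (E (n+1) k) (Psp (n+1) k)))) x := by
    have h1 : HasFDerivAt (fun y : Mfd (n+1) k => ξ y.1)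
        ((fderiv ℝ ξ x.1).comp (ContinuousLinearMap.fst ℝ (E (n+1) k) (Psp (n+1) k))) x := by
      exact ((hξ.differentiable (by simp) x.1).hasFDerivAt).comp x
        (ContinuousLinearMap.fst ℝ (E (n+1) k) (Psp (n+1) k)).hasFDerivAt
    exact ((consCLM μ.1 (fun i => (w i).1)).hasFDerivAt).comp x h1
  exact hc.mul hd

lemma fderiv_iotaTheta_apply (ξ : E (n+1) k → E (n+1) k) (hξ : ContDiff ℝ (⊤ : ℕ∞) ξ)
    (w : Fin n → Mfd (n+1) k) (x u : Mfd (n+1) k) :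
    fderiv ℝ (fun y => iota (XiP n k ξ) (theta (n+1) k) y w) x u =
      ∑ μ : Idx (n+1) k,
        (x.2 μ * Dm μ.1 (Fin.cons (fderiv ℝ ξ x.1 u.1) (fun i => (w i).1))
          + (u.2 μ) * Dm μ.1 (Fin.cons (ξ x.1) (fun i => (w i).1))) := by
  rw [(hasFDeriv_iotaTheta ξ hξ w x).fderiv, ContinuousLinearMap.sum_apply]
  refine Finset.sum_congr rfl fun μ _ => ?_
  simp only [ContinuousLinearMap.add_apply, ContinuousLinearMap.smul_apply,
    ContinuousLinearMap.comp_apply, ContinuousLinearMap.coe_fst',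
    ContinuousLinearMap.coe_snd', ContinuousLinearMap.proj_apply, consCLM_apply,
    smul_eq_mul]
  ring

end Aux4

section Aux5

variable {n k : ℕ}

lemma removeNth_succ_cons {α : Type*} (j : Fin (n+1)) (a : α) (v : Fin (n+1) → α) :
    Fin.removeNth (Fin.succ j) (Fin.cons a v : Fin (n+2) → α)
      = Fin.cons a (Fin.removeNth j v) := by
  funext b
  refine Fin.cases ?_ (fun c => ?_) b
  · show (Fin.cons a v : Fin (n+2) → α) ((Fin.succ j).succAbove 0) = a
    rw [Fin.succ_succAbove_zero]
    rfl
  · show (Fin.cons a v : Fin (n+2) → α) ((Fin.succ j).succAbove c.succ) = _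
    rw [Fin.succ_succAbove_succ, Fin.cons_succ]
    rfl

lemma Amat_eq (ξ : E (n+1) k → E (n+1) k) (hξ : ContDiff ℝ (⊤ : ℕ∞) ξ) (x : Mfd (n+1) k)
    (μ₀ ν : Fin (n+1+k)) :
    Amat ξ x μ₀ ν = (fderiv ℝ ξ x.1 (Pi.single ν 1)) μ₀ := by
  have h : HasFDerivAt (fun q => ξ q μ₀)
      ((ContinuousLinearMap.proj μ₀).comp (fderiv ℝ ξ x.1)) x.1 :=
    (ContinuousLinearMap.proj
      (R := ℝ) (φ := fun _ : Fin (n+1+k) => ℝ) μ₀).hasFDerivAt.comp x.1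
      (hξ.differentiable (by simp) x.1).hasFDerivAt
  rw [Amat, h.fderiv]
  rfl

end Aux5
/-- For every vector field `ξ` on `X×Y`, the pataplectic vector field `Ξ(P_ξ)` of
`P_ξ = ξ⌟θ` leaves the Poincaré–Cartan form invariant:
`L_{Ξ(P_ξ)}θ = Ξ(P_ξ)⌟dθ + d(Ξ(P_ξ)⌟θ) = 0`, and `Ξ(P_ξ)⌟θ = P_ξ`. -/
theorem XiP_preserves_theta
    (n k : ℕ)
    (ξ : E (n + 1) k → E (n + 1) k) (hξ : ContDiff ℝ (⊤ : ℕ∞) ξ) :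
    -- `Ξ(P_ξ) ⌟ θ = P_ξ`:
    (∀ (x : Mfd (n + 1) k) (v : Fin n → Mfd (n + 1) k),
      iota (XiP n k ξ) (theta (n + 1) k) x v = Pform n k ξ x v)
    ∧
    -- `L_{Ξ(P_ξ)} θ = Ξ(P_ξ) ⌟ dθ + d(Ξ(P_ξ) ⌟ θ) = 0`:
    (∀ (x : Mfd (n + 1) k) (v : Fin (n + 1) → Mfd (n + 1) k),
      iota (XiP n k ξ) (extD (theta (n + 1) k)) x v
        + extD (iota (XiP n k ξ) (theta (n + 1) k)) x v = 0) := by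

  constructor
  · intro x v
    rw [iota_theta_eq, Pform, iota, theta_eq]
    refine Finset.sum_congr rfl fun μ _ => ?_
    rw [cons_fst]
  · intro x v
    have hΩ : iota (XiP n k ξ) (extD (theta (n + 1) k)) x v
        = (∑ μ : Idx (n+1) k, (XiP n k ξ x).2 μ * Dm μ.1 (fun i => (v i).1))
          + ∑ j : Fin (n+1), (-1:ℝ)^((j:ℕ)+1) *
              ∑ μ : Idx (n+1) k, (v j).2 μ *
                Dm μ.1 (Fin.cons (ξ x.1) (Fin.removeNth j (fun i => (v i).1))) := by
      rw [iota, extD, Fin.sum_univ_succ]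
      congr 1
      · rw [fderiv_theta_apply]
        simp only [Fin.val_zero, pow_zero, one_mul, Fin.removeNth_zero, Fin.tail_cons,
          Fin.cons_zero]
      · refine Finset.sum_congr rfl fun j _ => ?_
        rw [fderiv_theta_apply]
        rw [removeNth_succ_cons j (XiP n k ξ x) v]
        simp only [Fin.cons_succ, Fin.val_succ]
        congr 1
        refine Finset.sum_congr rfl fun μ _ => ?_
        rw [cons_fst, XiP_fst]
        rfl
    have hd : extD (iota (XiP n k ξ) (theta (n + 1) k)) x v
        = ∑ i : Fin (n+1), (-1:ℝ)^(i:ℕ) *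
            ∑ μ : Idx (n+1) k,
              (x.2 μ * Dm μ.1 (Fin.cons (fderiv ℝ ξ x.1 ((v i).1))
                  (Fin.removeNth i (fun b => (v b).1)))
                + (v i).2 μ * Dm μ.1 (Fin.cons (ξ x.1)
                  (Fin.removeNth i (fun b => (v b).1)))) := by
      rw [extD]
      refine Finset.sum_congr rfl fun i _ => ?_
      rw [fderiv_iotaTheta_apply ξ hξ]
      rfl
    have key : ∑ i : Fin (n+1), (-1:ℝ)^(i:ℕ) *
        (∑ μ : Idx (n+1) k, x.2 μ * Dm μ.1 (Fin.cons (fderiv ℝ ξ x.1 ((v i).1))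
          (Fin.removeNth i (fun b => (v b).1))))
        = -∑ μ : Idx (n+1) k, (XiP n k ξ x).2 μ * Dm μ.1 (fun i => (v i).1) := by
      have h1 : ∀ i : Fin (n+1), (-1:ℝ)^(i:ℕ) *
          (∑ μ : Idx (n+1) k, x.2 μ * Dm μ.1 (Fin.cons (fderiv ℝ ξ x.1 ((v i).1))
            (Fin.removeNth i (fun b => (v b).1))))
          = ∑ μ : Idx (n+1) k, x.2 μ * Dm μ.1 (Function.update (fun b => (v b).1) i
              (fderiv ℝ ξ x.1 ((v i).1))) := by
        intro i
        rw [Finset.mul_sum]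
        refine Finset.sum_congr rfl fun μ _ => ?_
        rw [Dm_cons_removeNth]
        have hs : (-1:ℝ)^(i:ℕ) * ((-1:ℝ)^(i:ℕ)) = 1 := by
          rw [← mul_pow]; norm_num
        linear_combination (x.2 μ * Dm μ.1 (Function.update (fun b => (v b).1) i
          (fderiv ℝ ξ x.1 ((v i).1)))) * hs
      rw [Finset.sum_congr rfl fun i _ => h1 i, Finset.sum_comm]
      have h2 : ∀ μ : Idx (n+1) k,
          ∑ i : Fin (n+1), x.2 μ * Dm μ.1 (Function.update (fun b => (v b).1) i
            (fderiv ℝ ξ x.1 ((v i).1)))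
          = x.2 μ * ∑ b, ∑ ν : Fin (n+1+k), Amat ξ x (μ.1 b) ν *
              Dm (Function.update μ.1 b ν) (fun i => (v i).1) := by
        intro μ
        rw [← Finset.mul_sum]
        congr 1
        rw [Dm_deriv μ.1 (fun i => (v i).1) (fderiv ℝ ξ x.1)]
        refine Finset.sum_congr rfl fun b _ => Finset.sum_congr rfl fun ν _ => ?_
        rw [Amat_eq ξ hξ]
      rw [Finset.sum_congr rfl fun μ _ => h2 μ]
      rw [core_identity x.2 (fun i => (v i).1) (Amat ξ x)]
      rw [← Finset.sum_neg_distrib]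
      refine Finset.sum_congr rfl fun ρ _ => ?_
      rw [XiP_snd]
      ring
    rw [hΩ, hd]
    have hsplit : ∑ i : Fin (n+1), (-1:ℝ)^(i:ℕ) *
        ∑ μ : Idx (n+1) k,
          (x.2 μ * Dm μ.1 (Fin.cons (fderiv ℝ ξ x.1 ((v i).1))
              (Fin.removeNth i (fun b => (v b).1)))
            + (v i).2 μ * Dm μ.1 (Fin.cons (ξ x.1)
              (Fin.removeNth i (fun b => (v b).1))))
        = (∑ i : Fin (n+1), (-1:ℝ)^(i:ℕ) *
            (∑ μ : Idx (n+1) k, x.2 μ * Dm μ.1 (Fin.cons (fderiv ℝ ξ x.1 ((v i).1))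
              (Fin.removeNth i (fun b => (v b).1)))))
          + ∑ i : Fin (n+1), (-1:ℝ)^(i:ℕ) *
            (∑ μ : Idx (n+1) k, (v i).2 μ * Dm μ.1 (Fin.cons (ξ x.1)
              (Fin.removeNth i (fun b => (v b).1)))) := by
      rw [← Finset.sum_add_distrib]
      refine Finset.sum_congr rfl fun i _ => ?_
      rw [Finset.sum_add_distrib, mul_add]
    rw [hsplit, key]
    have hcancel : ∑ j : Fin (n+1), (-1:ℝ)^((j:ℕ)+1) *
        ∑ μ : Idx (n+1) k, (v j).2 μ *
          Dm μ.1 (Fin.cons (ξ x.1) (Fin.removeNth j (fun i => (v i).1)))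
        = -∑ i : Fin (n+1), (-1:ℝ)^(i:ℕ) *
            (∑ μ : Idx (n+1) k, (v i).2 μ * Dm μ.1 (Fin.cons (ξ x.1)
              (Fin.removeNth i (fun b => (v b).1)))) := by
      rw [← Finset.sum_neg_distrib]
      refine Finset.sum_congr rfl fun j _ => ?_
      rw [pow_succ]
      ring
    rw [hcancel]
    ring

end Pataplectic

end
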